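/- Convexity of the auxiliary function in the proof of Lemma 4: For every constant v ≥ 0, the function f₂(x) = ((v+1)e^x − 1)/x has strictly positive second derivative on (0, ∞); explicitly, f₂''(x) = v (e^x/x)[(1 − 1/x)² + 1/x²] + (e^x/x)[(1 − 1/x)² + (1 − 2e^{−x})/x²] > 0 for all x > 0. -/

import Mathlib

/-!
Twice differentiating gives `f₂''(x) = ((v + 1) eˣ (x² - 2x + 2) - 2) / x³`, and the numerator is
positive because `eˣ (x² - 2x + 2) ≥ (1 + x + x²/2)(x² - 2x + 2) = 2 + x⁴/2`.
-/

open Set Real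

lemma hasDerivAt_mul_exp_sub_one_div (a : ℝ) {x : ℝ} (hx : x ≠ 0) :
    HasDerivAt (fun y => (a * exp y - 1) / y) ((a * exp x * (x - 1) + 1) / x ^ 2) x :=
  ((((hasDerivAt_exp x).const_mul a).sub_const 1).div (hasDerivAt_id' x) hx).congr_deriv
    (by ring)

lemma hasDerivAt_deriv_mul_exp_sub_one_div (a : ℝ) {x : ℝ} (hx : x ≠ 0) :
    HasDerivAt (deriv fun y => (a * exp y - 1) / y)
      ((a * exp x * (x ^ 2 - 2 * x + 2) - 2) / x ^ 3) x := by
  have hderiv : deriv (fun y => (a * exp y - 1) / y) =ᶠ[nhds x]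
      fun y => (a * exp y * (y - 1) + 1) / y ^ 2 := by
    filter_upwards [isOpen_ne.mem_nhds hx] with y hy
    exact (hasDerivAt_mul_exp_sub_one_div a hy).deriv
  have hnum : HasDerivAt (fun y => a * exp y * (y - 1) + 1) (a * exp x * x) x :=
    ((((hasDerivAt_exp x).const_mul a).mul ((hasDerivAt_id' x).sub_const 1)).add_const
      1).congr_deriv (by ring)
  refine HasDerivAt.congr_of_eventuallyEq ?_ hderiv
  exact (hnum.div (hasDerivAt_pow 2 x) (pow_ne_zero 2 hx)).congr_deriv (by field_simp; ring)

lemma two_lt_exp_mul_sq_sub_two_mul_add_two {x : ℝ} (hx : 0 < x) :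
    2 < exp x * (x ^ 2 - 2 * x + 2) := by
  have hq : 0 ≤ x ^ 2 - 2 * x + 2 := by nlinarith [sq_nonneg (x - 1)]
  calc 2 < 2 + x ^ 4 / 2 := by linarith [pow_pos hx 4]
    _ = (1 + x + x ^ 2 / 2) * (x ^ 2 - 2 * x + 2) := by ring
    _ ≤ exp x * (x ^ 2 - 2 * x + 2) := by gcongr; exact quadratic_le_exp_of_nonneg hx.le

/-- **Convexity of the auxiliary function in the proof of Lemma 4.**
For every constant `v ≥ 0`, the function `f₂(x) = ((v+1)e^x − 1)/x` has strictly positive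
second derivative on `(0, ∞)`; explicitly, for all `x > 0`,
`f₂''(x) = v (e^x/x)[(1 − 1/x)² + 1/x²] + (e^x/x)[(1 − 1/x)² + (1 − 2e^{−x})/x²] > 0`. -/
theorem auxiliary_function_second_derivative
    (v : ℝ) (hv : 0 ≤ v)
    (f₂ : ℝ → ℝ) (hf₂ : ∀ x, f₂ x = ((v + 1) * Real.exp x - 1) / x) :
    ∀ x ∈ Ioi (0 : ℝ),
      deriv (deriv f₂) x
          = v * (Real.exp x / x) * ((1 - 1 / x) ^ 2 + 1 / x ^ 2)
            + (Real.exp x / x) * ((1 - 1 / x) ^ 2 + (1 - 2 * Real.exp (-x)) / x ^ 2) ∧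
      0 < deriv (deriv f₂) x := by
  intro x (hx : 0 < x)
  obtain rfl : f₂ = fun y => ((v + 1) * exp y - 1) / y := funext hf₂
  rw [(hasDerivAt_deriv_mul_exp_sub_one_div (v + 1) hx.ne').deriv]
  constructor
  · rw [exp_neg]
    field_simp
    ring
  · have hnum := two_lt_exp_mul_sq_sub_two_mul_add_two hx
    apply div_pos _ (by positivity)
    nlinarith [mul_le_mul_of_nonneg_left hnum.le hv]
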